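/- The orthonormality of associated Hahn polynomials: for 0 ≤ n, m ≤ N, ∑_{x=0}^{N} q_n(x) q_m(x) w(x) = δ_{n,m}, where w(x) = 1/(x!(x+α)!(N+β−x)!(N−x)!) and q_n is the polynomial of degree n given by q_n(x) = ((−N−β)_n(−N)_n/(d_n n!)) ∑_{j=0}^{n} C(n,j)(−1)^j (−x)_j (n−2N−α−β−1)_j / ((−N−β)_j(−N)_j), with d_n² = (α+β+N+1−n)_{N+1} / ((α+β+2N+1−2n) n! (β+N−n)! (α+N−n)! (N−n)!). -/

import Mathlib

open Finset

/-- The Pochhammer symbol `(a)_n = a(a+1)⋯(a+n-1)` for a real argument. -/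
noncomputable def poch (a : ℝ) (n : ℕ) : ℝ := ∏ i ∈ Finset.range n, (a + i)

/-- The Hahn weight `w^{(α,β)}_N(x) = 1/(x!(x+α)!(N+β-x)!(N-x)!)` on `{0,…,N}`. -/
noncomputable def hahnWeight (α β N x : ℕ) : ℝ :=
  ((Nat.factorial x * Nat.factorial (x + α) * Nat.factorial (N + β - x) *
      Nat.factorial (N - x) : ℕ) : ℝ)⁻¹

/-- The squared normalization constant `d_{n,N}^{(α,β)}²`. -/
noncomputable def hahnD2 (α β N n : ℕ) : ℝ :=
  poch ((α : ℝ) + β + N + 1 - n) (N + 1) /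
    (((α : ℝ) + β + 2 * N + 1 - 2 * n) * (Nat.factorial n : ℝ) *
      (Nat.factorial (β + N - n) : ℝ) * (Nat.factorial (α + N - n) : ℝ) *
      (Nat.factorial (N - n) : ℝ))

/-- The normalized associated Hahn polynomial `q^{(α,β)}_{n,N}(x)`. -/
noncomputable def hahnQ (α β N n : ℕ) (x : ℕ) : ℝ :=
  poch (-(N : ℝ) - β) n * poch (-(N : ℝ)) n /
      (Real.sqrt (hahnD2 α β N n) * (Nat.factorial n : ℝ)) *
    ∑ j ∈ Finset.range (n + 1),
      (n.choose j : ℝ) * (-1 : ℝ) ^ j * poch (-(x : ℝ)) j *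
          poch ((n : ℝ) - 2 * N - α - β - 1) j /
        (poch (-(N : ℝ) - β) j * poch (-(N : ℝ)) j)

/-!
The Hahn weight satisfies the Pearson equation `w(x+1) σ(x+1) = w(x) τ(x)` with
`σ(x) = x(x+α)`, `τ(x) = (N-x)(N+β-x)` and `σ(0) = τ(N) = 0`, so summation by parts makes the
difference operator `L f = σ (f(x-1) - f(x)) + τ (f(x+1) - f(x))` symmetric for `w` on
`{0,…,N}`. On falling factorials `L (x)_j = λ_j (x)_j + B_j (x)_{j-1}`, and the coefficients of
the hypergeometric sum satisfy exactly the recursion making it an eigenfunction of `L` with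
eigenvalue `λ_n = n(n - 2N - α - β - 1)`. These eigenvalues are distinct for `n ≤ N`, which gives
orthogonality. For the norm, the moments `U_k = ∑ (x)_k P_n(x) w(x)` satisfy
`(λ_n - λ_k) U_k = B_k U_{k-1}`: they vanish for `k < n`, and `U_n` is the top moment
`U_N = N! P_n(N) w(N)` times products of eigenvalue gaps and of the `B_k`. Finally `P_n(N)` is a
Chu–Vandermonde sum, and everything reduces to factorials.
-/

open Polynomial
open scoped Nat

lemma neg_one_pow_sq {R : Type*} [Monoid R] [HasDistribNeg R] (n : ℕ) :
    ((-1 : R) ^ n) ^ 2 = 1 := by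
  rw [← pow_mul, mul_comm, pow_mul, neg_one_sq, one_pow]

lemma prod_range_natCast_sub (A M : ℕ) : ∏ i ∈ range M, ((A : ℝ) - i) = A.descFactorial M := by
  rw [← descPochhammer_eval_eq_prod_range, descPochhammer_eval_eq_descFactorial]

lemma natCast_descFactorial_eq_div {A j : ℕ} (h : j ≤ A) :
    (A.descFactorial j : ℝ) = A ! / (A - j)! := by
  rw [eq_div_iff (by positivity), mul_comm]
  exact_mod_cast Nat.factorial_mul_descFactorial h

lemma natCast_ascFactorial_eq_div (A j : ℕ) : ((A + 1).ascFactorial j : ℝ) = (A + j)! / A ! := by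
  rw [eq_div_iff (by positivity), mul_comm]
  exact_mod_cast Nat.factorial_mul_ascFactorial A j

lemma descPochhammer_eval_add {R : Type*} [CommRing R] (r s : R) (n : ℕ) :
    (descPochhammer R n).eval (r + s) = ∑ j ∈ range (n + 1),
      n.choose j * (descPochhammer R j).eval r * (descPochhammer R (n - j)).eval s := by
  have h := Ring.descPochhammer_smeval_add n (Commute.all r s)
  simp only [← aeval_eq_smeval, aeval_def, eval₂_eq_eval_map, descPochhammer_map] at h
  rw [h, Nat.sum_antidiagonal_eq_sum_range_succ_mk]
  exact sum_congr rfl fun j _ => by ring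

lemma poch_succ (a : ℝ) (n : ℕ) : poch a (n + 1) = poch a n * (a + n) :=
  prod_range_succ _ _

lemma poch_add (a : ℝ) (m k : ℕ) : poch a (m + k) = poch a m * poch (a + m) k := by
  simp only [poch, prod_range_add, add_assoc, Nat.cast_add]

lemma poch_eq_ascPochhammer_eval (a : ℝ) (n : ℕ) : poch a n = (ascPochhammer ℝ n).eval a := by
  induction n with
  | zero => simp [poch]
  | succ n ih => rw [poch_succ, ih, ascPochhammer_succ_eval]

lemma poch_eq_descPochhammer_eval (a : ℝ) (n : ℕ) :
    poch a n = (descPochhammer ℝ n).eval (a + n - 1) := by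
  rw [poch_eq_ascPochhammer_eval, descPochhammer_eval_eq_ascPochhammer]
  ring_nf

lemma poch_neg (t : ℝ) (j : ℕ) : poch (-t) j = (-1) ^ j * (descPochhammer ℝ j).eval t := by
  rw [poch_eq_ascPochhammer_eval, ascPochhammer_eval_neg_eq_descPochhammer]

lemma poch_natCast_add_one (A j : ℕ) : poch (A + 1) j = (A + j)! / A ! := by
  rw [poch_eq_ascPochhammer_eval, ← Nat.cast_add_one, ascPochhammer_nat_eq_natCast_ascFactorial,
    natCast_ascFactorial_eq_div]

lemma poch_neg_natCast {A j : ℕ} (h : j ≤ A) : poch (-A) j = (-1) ^ j * (A ! / (A - j)!) := by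
  rw [poch_neg, descPochhammer_eval_eq_descFactorial, natCast_descFactorial_eq_div h]

lemma poch_pos {a : ℝ} (ha : 0 < a) (n : ℕ) : 0 < poch a n := by
  rw [poch_eq_ascPochhammer_eval]
  exact ascPochhammer_pos n a ha

lemma poch_ne_zero_of_add_le_zero {a : ℝ} {n : ℕ} (ha : a + n ≤ 0) : poch a n ≠ 0 :=
  prod_ne_zero_iff.mpr fun i hi => by
    have : (i : ℝ) + 1 ≤ n := by exact_mod_cast mem_range.mp hi
    linarith

lemma poch_neg_sub_ne_zero {N j : ℕ} {b : ℝ} (hb : 0 ≤ b) (hj : j ≤ N) :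
    poch (-(N : ℝ) - b) j ≠ 0 :=
  poch_ne_zero_of_add_le_zero <| by
    have : (j : ℝ) ≤ N := by exact_mod_cast hj
    linarith

lemma poch_neg_ne_zero {N j : ℕ} (hj : j ≤ N) : poch (-(N : ℝ)) j ≠ 0 := by
  simpa using poch_neg_sub_ne_zero le_rfl hj

def diffOp (σ τ f : ℝ → ℝ) (t : ℝ) : ℝ :=
  σ t * f (t - 1) + τ t * f (t + 1) - (σ t + τ t) * f t

lemma diffOp_sum {ι : Type*} (σ τ : ℝ → ℝ) (s : Finset ι) (c : ι → ℝ) (f : ι → ℝ → ℝ) (t : ℝ) :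
    diffOp σ τ (fun u => ∑ i ∈ s, c i * f i u) t = ∑ i ∈ s, c i * diffOp σ τ (f i) t := by
  simp only [diffOp, mul_sum, ← sum_add_distrib, ← sum_sub_distrib]
  exact sum_congr rfl fun i _ => by ring

section SummationByParts

variable {w : ℕ → ℝ} {σ τ : ℝ → ℝ} {N : ℕ}

lemma sum_diffOp_mul_mul_weight (hσ : σ 0 = 0) (hτ : τ N = 0)
    (hw : ∀ x < N, w (x + 1) * σ (x + 1) = w x * τ x) (f g : ℝ → ℝ) :
    ∑ x ∈ range (N + 1), diffOp σ τ f x * g x * w x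
      = ∑ x ∈ range N, w x * τ x * (f x * g (x + 1) + f (x + 1) * g x)
        - ∑ x ∈ range (N + 1), w x * (σ x + τ x) * f x * g x := by
  have hdown : ∑ x ∈ range (N + 1), w x * σ x * f (x - 1) * g x
      = ∑ x ∈ range N, w x * τ x * (f x * g (x + 1)) := by
    rw [sum_range_succ']
    simp only [Nat.cast_zero, hσ, mul_zero, zero_mul, add_zero]
    refine sum_congr rfl fun x hx => ?_
    push_cast
    rw [add_sub_cancel_right, ← hw x (mem_range.mp hx)]
    ring
  have hup : ∑ x ∈ range (N + 1), w x * τ x * f (x + 1) * g x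
      = ∑ x ∈ range N, w x * τ x * (f (x + 1) * g x) := by
    rw [sum_range_succ, hτ]
    simp only [mul_zero, zero_mul, add_zero, mul_assoc]
  simp only [diffOp, ← hdown, ← hup, mul_add, sum_add_distrib]
  rw [← sum_add_distrib, ← sum_sub_distrib]
  exact sum_congr rfl fun x _ => by ring

lemma sum_diffOp_mul_mul_weight_comm (hσ : σ 0 = 0) (hτ : τ N = 0)
    (hw : ∀ x < N, w (x + 1) * σ (x + 1) = w x * τ x) (f g : ℝ → ℝ) :
    ∑ x ∈ range (N + 1), diffOp σ τ f x * g x * w x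
      = ∑ x ∈ range (N + 1), diffOp σ τ g x * f x * w x := by
  rw [sum_diffOp_mul_mul_weight hσ hτ hw, sum_diffOp_mul_mul_weight hσ hτ hw]
  congr 1 <;> exact sum_congr rfl fun x _ => by ring

lemma sum_diffOp_mul_mul_weight_of_eigen (hσ : σ 0 = 0) (hτ : τ N = 0)
    (hw : ∀ x < N, w (x + 1) * σ (x + 1) = w x * τ x) (f : ℝ → ℝ) {g : ℝ → ℝ} {μ : ℝ}
    (hg : ∀ x : ℕ, diffOp σ τ g x = μ * g x) :
    ∑ x ∈ range (N + 1), diffOp σ τ f x * g x * w x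
      = μ * ∑ x ∈ range (N + 1), f x * g x * w x := by
  rw [sum_diffOp_mul_mul_weight_comm hσ hτ hw, mul_sum]
  exact sum_congr rfl fun x _ => by rw [hg]; ring

end SummationByParts

noncomputable def hahnSigma (α : ℕ) (t : ℝ) : ℝ := t * (t + α)

noncomputable def hahnTau (β N : ℕ) (t : ℝ) : ℝ := (N - t) * (N + β - t)

noncomputable def hahnEigenvalue (α β N k : ℕ) : ℝ := k * (k - (2 * N + α + β + 1))

noncomputable def hahnLowering (β N k : ℕ) : ℝ := k * (N + 1 - k) * (N + β + 1 - k)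

noncomputable def hahnCoeff (α β N n j : ℕ) : ℝ :=
  n.choose j * poch ((n : ℝ) - 2 * N - α - β - 1) j / (poch (-(N : ℝ) - β) j * poch (-(N : ℝ)) j)

/-- The sum in `hahnQ`, rewritten in the falling-factorial basis via
`(-1)^j (-x)_j = x(x-1)⋯(x-j+1)`, on which `diffOp (hahnSigma α) (hahnTau β N)` is triangular. -/
noncomputable def hahnPoly (α β N n : ℕ) (t : ℝ) : ℝ :=
  ∑ j ∈ range (n + 1), hahnCoeff α β N n j * (descPochhammer ℝ j).eval t

noncomputable def hahnMoment (α β N n k : ℕ) : ℝ :=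
  ∑ x ∈ range (N + 1), (descPochhammer ℝ k).eval (x : ℝ) * hahnPoly α β N n x * hahnWeight α β N x

noncomputable def hahnNorm (α β N n : ℕ) : ℝ :=
  poch (-(N : ℝ) - β) n * poch (-(N : ℝ)) n / (Real.sqrt (hahnD2 α β N n) * n !)

section Hahn

variable {α β N : ℕ}

variable (α) in
lemma hahnSigma_zero : hahnSigma α 0 = 0 := by simp [hahnSigma]

variable (β N) in
lemma hahnTau_self : hahnTau β N N = 0 := by simp [hahnTau]

lemma hahnWeight_succ_mul_hahnSigma {x : ℕ} (hx : x < N) :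
    hahnWeight α β N (x + 1) * hahnSigma α (x + 1) = hahnWeight α β N x * hahnTau β N x := by
  obtain ⟨K, rfl⟩ := Nat.exists_eq_add_of_lt hx
  have e1 : x + K + 1 + β - (x + 1) = K + β := by omega
  have e2 : x + K + 1 - (x + 1) = K := by omega
  have e3 : x + K + 1 + β - x = K + β + 1 := by omega
  have e4 : x + K + 1 - x = K + 1 := by omega
  simp only [hahnWeight, hahnSigma, hahnTau, e1, e2, e3, e4, Nat.add_right_comm x 1 α,
    Nat.factorial_succ]
  push_cast
  field_simp
  ring

lemma sum_hahn_diffOp_mul_mul_weight_of_eigen (f : ℝ → ℝ) {g : ℝ → ℝ} {μ : ℝ}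
    (hg : ∀ x : ℕ, diffOp (hahnSigma α) (hahnTau β N) g x = μ * g x) :
    ∑ x ∈ range (N + 1), diffOp (hahnSigma α) (hahnTau β N) f x * g x * hahnWeight α β N x
      = μ * ∑ x ∈ range (N + 1), f x * g x * hahnWeight α β N x :=
  sum_diffOp_mul_mul_weight_of_eigen (hahnSigma_zero α) (hahnTau_self β N)
    (fun _ hx => hahnWeight_succ_mul_hahnSigma hx) f hg

variable (α β N) in
lemma diffOp_hahn_descPochhammer (j : ℕ) (t : ℝ) :
    diffOp (hahnSigma α) (hahnTau β N) (fun s => (descPochhammer ℝ j).eval s) t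
      = hahnEigenvalue α β N j * (descPochhammer ℝ j).eval t
        + hahnLowering β N j * (descPochhammer ℝ (j - 1)).eval t := by
  rcases j with _ | j
  · simp [diffOp, hahnEigenvalue, hahnLowering]
  have hleft : ∀ (k : ℕ) (s : ℝ),
      (descPochhammer ℝ (k + 1)).eval s = s * (descPochhammer ℝ k).eval (s - 1) := fun k s => by
    simp [descPochhammer_succ_left]
  have hdown : t * (descPochhammer ℝ (j + 1)).eval (t - 1)
      = (descPochhammer ℝ j).eval t * ((t - j) * (t - (j + 1))) := by
    rw [← hleft, descPochhammer_succ_eval, descPochhammer_succ_eval]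
    push_cast
    ring
  have hup := hleft j (t + 1)
  rw [add_sub_cancel_right] at hup
  simp only [diffOp, hahnSigma, hahnTau, hahnEigenvalue, hahnLowering, hup,
    descPochhammer_succ_eval j t, Nat.add_sub_cancel]
  push_cast
  linear_combination (t + α) * hdown

lemma hahnCoeff_succ_mul_hahnLowering {n j : ℕ} (hn : n ≤ N) (hj : j < n) :
    hahnCoeff α β N n (j + 1) * hahnLowering β N (j + 1)
      = hahnCoeff α β N n j * (hahnEigenvalue α β N n - hahnEigenvalue α β N j) := by
  have hjN : j < N := hj.trans_le hn
  have hchoose : (n.choose (j + 1) : ℝ) * (j + 1) = n.choose j * (n - j) := by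
    rw [← Nat.cast_sub hj.le]
    exact_mod_cast Nat.choose_succ_right_eq n j
  have hb := poch_neg_sub_ne_zero (Nat.cast_nonneg β) hjN.le
  have hc := poch_neg_ne_zero hjN.le
  have hjN' : (j : ℝ) + 1 ≤ N := by exact_mod_cast hjN
  have hb' : -(N : ℝ) - β + j ≠ 0 := by
    have : (0 : ℝ) ≤ β := by positivity
    intro h; linarith
  have hc' : -(N : ℝ) + j ≠ 0 := by intro h; linarith
  simp only [hahnCoeff, hahnLowering, hahnEigenvalue, poch_succ]
  field_simp
  push_cast
  linear_combination poch ((n : ℝ) - 2 * N - α - β - 1) j * (n - 2 * N - α - β - 1 + j) *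
    (N - j) * (N + β - j) * hchoose

variable (α β) in
lemma diffOp_hahnPoly {n : ℕ} (hn : n ≤ N) (t : ℝ) :
    diffOp (hahnSigma α) (hahnTau β N) (hahnPoly α β N n) t
      = hahnEigenvalue α β N n * hahnPoly α β N n t := by
  have hlower : ∑ j ∈ range (n + 1),
      hahnCoeff α β N n j * hahnLowering β N j * (descPochhammer ℝ (j - 1)).eval t
      = ∑ j ∈ range n, hahnCoeff α β N n j *
          (hahnEigenvalue α β N n - hahnEigenvalue α β N j) * (descPochhammer ℝ j).eval t := by
    rw [sum_range_succ']
    simp only [hahnLowering, CharP.cast_eq_zero, zero_mul, mul_zero, add_zero]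
    refine sum_congr rfl fun j hj => ?_
    rw [← hahnCoeff_succ_mul_hahnLowering hn (mem_range.mp hj), Nat.add_sub_cancel, hahnLowering]
  have hpoly : hahnPoly α β N n = fun u => ∑ j ∈ range (n + 1),
      hahnCoeff α β N n j * (descPochhammer ℝ j).eval u := rfl
  rw [hpoly, diffOp_sum]
  simp only [diffOp_hahn_descPochhammer, mul_add, sum_add_distrib, ← mul_assoc, hlower]
  rw [sum_range_succ, mul_sum, sum_range_succ, add_right_comm, ← sum_add_distrib]
  congr 1
  · exact sum_congr rfl fun j _ => by ring
  · ring

lemma hahnEigenvalue_injOn : Set.InjOn (hahnEigenvalue α β N) (Set.Iic N) := by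
  intro a ha b hb h
  have hfac : ((a : ℝ) - b) * (a + b - (2 * N + α + β + 1)) = 0 := by
    simp only [hahnEigenvalue] at h
    linear_combination h
  have : (a : ℝ) + b ≤ 2 * N := by
    have : (a : ℝ) ≤ N := by exact_mod_cast ha
    have : (b : ℝ) ≤ N := by exact_mod_cast hb
    linarith
  have : (0 : ℝ) ≤ α + β := by positivity
  rcases mul_eq_zero.mp hfac with h | h
  · exact_mod_cast sub_eq_zero.mp h
  · linarith

lemma sum_hahnPoly_mul_hahnPoly_of_ne {n m : ℕ} (hn : n ≤ N) (hm : m ≤ N) (hnm : n ≠ m) :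
    ∑ x ∈ range (N + 1), hahnPoly α β N n x * hahnPoly α β N m x * hahnWeight α β N x = 0 := by
  have h := sum_hahn_diffOp_mul_mul_weight_of_eigen (hahnPoly α β N n)
    fun x => diffOp_hahnPoly α β hm x
  simp only [diffOp_hahnPoly α β hn, mul_assoc, ← mul_sum] at h
  have hne : hahnEigenvalue α β N n - hahnEigenvalue α β N m ≠ 0 :=
    sub_ne_zero.mpr fun h => hnm (hahnEigenvalue_injOn hn hm h)
  simp only [mul_assoc]
  exact (mul_eq_zero.mp (by linear_combination h)).resolve_left hne

lemma hahnEigenvalue_sub_mul_hahnMoment {n : ℕ} (hn : n ≤ N) (k : ℕ) :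
    (hahnEigenvalue α β N n - hahnEigenvalue α β N k) * hahnMoment α β N n k
      = hahnLowering β N k * hahnMoment α β N n (k - 1) := by
  have h := sum_hahn_diffOp_mul_mul_weight_of_eigen (fun s => (descPochhammer ℝ k).eval s)
    fun x => diffOp_hahnPoly α β hn x
  simp only [diffOp_hahn_descPochhammer, add_mul, sum_add_distrib, mul_assoc, ← mul_sum] at h
  simp only [hahnMoment, mul_assoc]
  linear_combination -h

lemma hahnMoment_eq_zero {n k : ℕ} (hn : n ≤ N) (hk : k < n) : hahnMoment α β N n k = 0 := by
  have hne : ∀ k < n, hahnEigenvalue α β N n - hahnEigenvalue α β N k ≠ 0 := fun k hk =>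
    sub_ne_zero.mpr fun h => hk.ne' (hahnEigenvalue_injOn hn (hk.le.trans (by omega)) h)
  have hrec := hahnEigenvalue_sub_mul_hahnMoment (α := α) (β := β) hn
  induction k with
  | zero => simpa [hahnLowering, hne 0 hk] using hrec 0
  | succ k ih =>
    have h := hrec (k + 1)
    rw [Nat.add_sub_cancel, ih (by omega), mul_zero] at h
    exact (mul_eq_zero.mp h).resolve_left (hne _ hk)

lemma sum_hahnPoly_mul_self {n : ℕ} (hn : n ≤ N) :
    ∑ x ∈ range (N + 1), hahnPoly α β N n x * hahnPoly α β N n x * hahnWeight α β N x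
      = hahnCoeff α β N n n * hahnMoment α β N n n := by
  have hexpand : ∑ x ∈ range (N + 1),
      hahnPoly α β N n x * hahnPoly α β N n x * hahnWeight α β N x
      = ∑ j ∈ range (n + 1), hahnCoeff α β N n j * hahnMoment α β N n j := by
    simp only [hahnMoment, mul_sum]
    rw [sum_comm]
    refine sum_congr rfl fun x _ => ?_
    nth_rw 1 [hahnPoly]
    rw [sum_mul, sum_mul]
    exact sum_congr rfl fun j _ => by ring
  rw [hexpand, sum_range_succ, sum_eq_zero fun j hj => by
    rw [hahnMoment_eq_zero hn (mem_range.mp hj), mul_zero], zero_add]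

lemma hahnMoment_mul_prod_hahnLowering {n j : ℕ} (hn : n ≤ N) (hnj : n ≤ j) (hj : j ≤ N) :
    hahnMoment α β N n n * ∏ k ∈ Ioc n j, hahnLowering β N k
      = hahnMoment α β N n j *
          ∏ k ∈ Ioc n j, (hahnEigenvalue α β N n - hahnEigenvalue α β N k) := by
  induction j, hnj using Nat.le_induction with
  | base => simp
  | succ j hnj ih =>
    have hstep := hahnEigenvalue_sub_mul_hahnMoment (α := α) (β := β) hn (j + 1)
    rw [Nat.add_sub_cancel] at hstep
    rw [prod_Ioc_succ_top hnj, prod_Ioc_succ_top hnj, ← mul_assoc, ih (by omega)]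
    linear_combination
      (∏ k ∈ Ioc n j, (hahnEigenvalue α β N n - hahnEigenvalue α β N k)) * hstep.symm

variable (α β) in
lemma hahnMoment_top (n : ℕ) :
    hahnMoment α β N n N = N ! * hahnPoly α β N n N * hahnWeight α β N N := by
  rw [hahnMoment, sum_range_succ, sum_eq_zero fun x hx => by
    rw [descPochhammer_eval_coe_nat_of_lt (mem_range.mp hx), zero_mul, zero_mul], zero_add,
    descPochhammer_eval_eq_descFactorial, Nat.descFactorial_self]

variable (α β) in
lemma poch_mul_hahnPoly_natCast_self {n : ℕ} (hn : n ≤ N) :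
    poch (-(N : ℝ) - β) n * hahnPoly α β N n N = (N + α)! / (N + α - n)! := by
  have hterm : ∀ j ∈ range (n + 1), poch (-(N : ℝ) - β) n *
      (hahnCoeff α β N n j * (descPochhammer ℝ j).eval (N : ℝ))
      = n.choose j * (descPochhammer ℝ j).eval (-((n : ℝ) - 2 * N - α - β - 1)) *
        (descPochhammer ℝ (n - j)).eval (-(N : ℝ) - β + n - 1) := by
    intro j hj
    have hjn : j ≤ n := Nat.lt_succ_iff.mp (mem_range.mp hj)
    have hb := poch_neg_sub_ne_zero (Nat.cast_nonneg β) (hjn.trans hn)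
    have hN : (descPochhammer ℝ j).eval (N : ℝ) ≠ 0 := by
      rw [descPochhammer_eval_eq_descFactorial]
      exact Nat.cast_ne_zero.mpr (Nat.descFactorial_eq_zero_iff_lt.not.mpr (by omega))
    have hsplit : poch (-(N : ℝ) - β) n = poch (-(N : ℝ) - β) j *
        (descPochhammer ℝ (n - j)).eval (-(N : ℝ) - β + n - 1) := by
      rw [← Nat.add_sub_cancel' hjn, poch_add, poch_eq_descPochhammer_eval (_ + _),
        Nat.add_sub_cancel' hjn, Nat.cast_sub hjn]
      ring_nf
    have ha := poch_neg (-((n : ℝ) - 2 * N - α - β - 1)) j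
    rw [neg_neg] at ha
    rw [hahnCoeff, hsplit, ha, poch_neg]
    field_simp
  rw [hahnPoly, mul_sum, sum_congr rfl hterm, ← descPochhammer_eval_add,
    show -((n : ℝ) - 2 * N - α - β - 1) + (-N - β + n - 1) = (N + α : ℕ) by push_cast; ring,
    descPochhammer_eval_eq_descFactorial, natCast_descFactorial_eq_div (by omega)]

variable (α β) in
lemma prod_hahnEigenvalue_sub (n M : ℕ) :
    ∏ k ∈ Ioc n (n + M), (hahnEigenvalue α β (n + M) n - hahnEigenvalue α β (n + M) k)
      = M ! * ((2 * M + α + β)! / (M + α + β)!) := by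
  rw [← Ico_add_one_add_one_eq_Ioc, prod_Ico_eq_prod_range, Nat.add_sub_add_right,
    Nat.add_sub_cancel_left]
  have hfactor : ∀ i ∈ range M,
      hahnEigenvalue α β (n + M) n - hahnEigenvalue α β (n + M) (n + 1 + i)
        = ((i : ℝ) + 1) * (((2 * M + α + β : ℕ) : ℝ) - i) := fun i _ => by
    simp only [hahnEigenvalue]
    push_cast
    ring
  have hfact : ∏ i ∈ range M, ((i : ℝ) + 1) = M ! := by
    exact_mod_cast prod_range_add_one_eq_factorial M
  rw [prod_congr rfl hfactor, prod_mul_distrib, prod_range_natCast_sub, hfact,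
    natCast_descFactorial_eq_div (by omega), show 2 * M + α + β - M = M + α + β by omega]

variable (β) in
lemma prod_hahnLowering (n M : ℕ) :
    ∏ k ∈ Ioc n (n + M), hahnLowering β (n + M) k
      = (n + M)! / n ! * M ! * ((M + β)! / β !) := by
  rw [← Ico_add_one_add_one_eq_Ioc, prod_Ico_eq_prod_range, Nat.add_sub_add_right,
    Nat.add_sub_cancel_left]
  have hfactor : ∀ i ∈ range M, hahnLowering β (n + M) (n + 1 + i)
        = (((n + 1 : ℕ) : ℝ) + i) * (((M : ℕ) : ℝ) - i) * (((M + β : ℕ) : ℝ) - i) := fun i _ => by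
    simp only [hahnLowering]
    push_cast
    ring
  rw [prod_congr rfl hfactor, prod_mul_distrib, prod_mul_distrib, prod_range_natCast_sub,
    prod_range_natCast_sub, Nat.descFactorial_self, natCast_descFactorial_eq_div (by omega),
    Nat.add_sub_cancel_left, ← natCast_ascFactorial_eq_div, Nat.ascFactorial_eq_prod_range]
  push_cast
  ring

lemma hahnMoment_self_eq (n M : ℕ) :
    hahnMoment α β (n + M) n n
      = (n + M)! * hahnPoly α β (n + M) n (n + M : ℕ) * hahnWeight α β (n + M) (n + M) *
          (M ! * ((2 * M + α + β)! / (M + α + β)!)) /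
          ((n + M)! / n ! * M ! * ((M + β)! / β !)) := by
  rw [← prod_hahnEigenvalue_sub α β n M, ← prod_hahnLowering β n M, ← hahnMoment_top,
    eq_div_iff (by rw [prod_hahnLowering]; positivity),
    hahnMoment_mul_prod_hahnLowering (Nat.le_add_right n M) (Nat.le_add_right n M) le_rfl]

lemma sum_hahnPoly_mul_self_mul_sq {n : ℕ} (hn : n ≤ N) :
    (∑ x ∈ range (N + 1), hahnPoly α β N n x * hahnPoly α β N n x * hahnWeight α β N x) *
        (poch (-(N : ℝ) - β) n * poch (-(N : ℝ)) n / n !) ^ 2 = hahnD2 α β N n := by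
  obtain ⟨M, rfl⟩ := Nat.exists_eq_add_of_le hn
  have hb := poch_neg_sub_ne_zero (Nat.cast_nonneg β) hn
  have hpoly : hahnPoly α β (n + M) n (n + M : ℕ)
      = (n + M + α)! / (M + α)! / poch (-((n + M : ℕ) : ℝ) - β) n := by
    rw [eq_div_iff hb, mul_comm, poch_mul_hahnPoly_natCast_self α β hn,
      show n + M + α - n = M + α by omega]
  have hupper : poch ((n : ℝ) - 2 * ↑(n + M) - α - β - 1) n
      = (-1) ^ n * ((n + 2 * M + α + β + 1)! / ((2 * M + α + β + 1) * (2 * M + α + β)!)) := by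
    rw [show (n : ℝ) - 2 * ↑(n + M) - α - β - 1 = -↑(n + 2 * M + α + β + 1) by push_cast; ring,
      poch_neg_natCast (by omega), show n + 2 * M + α + β + 1 - n = 2 * M + α + β + 1 by omega,
      Nat.factorial_succ (2 * M + α + β)]
    push_cast
    ring
  have hlower : poch (-((n + M : ℕ) : ℝ)) n = (-1) ^ n * ((n + M)! / M !) := by
    rw [poch_neg_natCast (by omega), Nat.add_sub_cancel_left]
  have hnorm : poch ((α : ℝ) + β + ↑(n + M) + 1 - n) (n + M + 1)
      = (n + 2 * M + α + β + 1)! / (M + α + β)! := by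
    rw [show (α : ℝ) + β + ↑(n + M) + 1 - n = ↑(M + α + β) + 1 by push_cast; ring,
      poch_natCast_add_one, show M + α + β + (n + M + 1) = n + 2 * M + α + β + 1 by omega]
  have hden : (α : ℝ) + β + 2 * ↑(n + M) + 1 - 2 * n = 2 * M + α + β + 1 := by push_cast; ring
  rw [sum_hahnPoly_mul_self hn, hahnMoment_self_eq, hpoly]
  simp only [hahnCoeff, hahnD2, hahnWeight, Nat.choose_self, hupper, hlower, hnorm, hden,
    show β + (n + M) - n = M + β by omega, show α + (n + M) - n = M + α by omega,
    Nat.add_sub_cancel_left, Nat.sub_self]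
  field_simp
  rw [neg_one_pow_sq]
  push_cast
  ring

lemma hahnD2_pos {n : ℕ} (hn : n ≤ N) : 0 < hahnD2 α β N n := by
  have hnN : (n : ℝ) ≤ N := by exact_mod_cast hn
  have hαβ : (0 : ℝ) ≤ α + β := by positivity
  have hnum := poch_pos (a := (α : ℝ) + β + N + 1 - n) (by linarith) (N + 1)
  have hlin : (0 : ℝ) < α + β + 2 * N + 1 - 2 * n := by linarith
  unfold hahnD2
  positivity

variable (α β N) in
lemma hahnQ_eq_hahnNorm_mul_hahnPoly (n x : ℕ) :
    hahnQ α β N n x = hahnNorm α β N n * hahnPoly α β N n x := by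
  rw [hahnQ, hahnNorm, hahnPoly]
  congr 1
  refine sum_congr rfl fun j _ => ?_
  rw [hahnCoeff, poch_neg]
  linear_combination (n.choose j * (descPochhammer ℝ j).eval (x : ℝ) *
    poch ((n : ℝ) - 2 * N - α - β - 1) j / (poch (-(N : ℝ) - β) j * poch (-(N : ℝ)) j)) *
    neg_one_pow_sq (R := ℝ) j

lemma hahnNorm_sq {n : ℕ} (hn : n ≤ N) :
    hahnNorm α β N n ^ 2
      = (poch (-(N : ℝ) - β) n * poch (-(N : ℝ)) n / n !) ^ 2 / hahnD2 α β N n := by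
  rw [hahnNorm, div_pow, mul_pow (√_), Real.sq_sqrt (hahnD2_pos hn).le, div_pow]
  ring

lemma sum_hahnQ_mul_self {n : ℕ} (hn : n ≤ N) :
    ∑ x ∈ range (N + 1), hahnQ α β N n x * hahnQ α β N n x * hahnWeight α β N x = 1 := by
  calc _ = (∑ x ∈ range (N + 1), hahnPoly α β N n x * hahnPoly α β N n x * hahnWeight α β N x) *
        hahnNorm α β N n ^ 2 := by
        rw [sum_mul]
        exact sum_congr rfl fun x _ => by rw [hahnQ_eq_hahnNorm_mul_hahnPoly]; ring
    _ = 1 := by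
      rw [hahnNorm_sq hn, mul_div_assoc', sum_hahnPoly_mul_self_mul_sq hn,
        div_self (hahnD2_pos hn).ne']

lemma sum_hahnQ_mul_hahnQ_of_ne {n m : ℕ} (hn : n ≤ N) (hm : m ≤ N) (hnm : n ≠ m) :
    ∑ x ∈ range (N + 1), hahnQ α β N n x * hahnQ α β N m x * hahnWeight α β N x = 0 := by
  calc _ = hahnNorm α β N n * hahnNorm α β N m *
        ∑ x ∈ range (N + 1), hahnPoly α β N n x * hahnPoly α β N m x * hahnWeight α β N x := by
        rw [mul_sum]
        exact sum_congr rfl fun x _ => by simp only [hahnQ_eq_hahnNorm_mul_hahnPoly]; ring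
    _ = 0 := by rw [sum_hahnPoly_mul_hahnPoly_of_ne hn hm hnm, mul_zero]

end Hahn

theorem hahn_orthonormal_general (α β N n m : ℕ) (hn : n ≤ N) (hm : m ≤ N) :
    ∑ x ∈ Finset.range (N + 1), hahnQ α β N n x * hahnQ α β N m x * hahnWeight α β N x
      = if n = m then 1 else 0 := by
  split_ifs with hnm
  · subst hnm
    exact sum_hahnQ_mul_self hn
  · exact sum_hahnQ_mul_hahnQ_of_ne hn hm hnm

/-- Orthonormality of the associated Hahn polynomials with respect to the
weight `w^{(α,β)}_N` on `{0,1,…,N}`. -/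
theorem hahn_orthonormal (α β N n m : ℕ) (hN : 0 < N) (hn : n ≤ N) (hm : m ≤ N) :
    ∑ x ∈ Finset.range (N + 1), hahnQ α β N n x * hahnQ α β N m x * hahnWeight α β N x
      = if n = m then 1 else 0 :=
  hahn_orthonormal_general α β N n m hn hm
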